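/- Suppose f satisfies (a), (b), (d) (the condition f(0) = 0 is not assumed), and let F(z) = (f(z) − f(0))/(1 − conj(f(0)) · f(z)). Then F satisfies hypotheses (a), (b), (c), (d) at the same boundary point b, and its derivative at b satisfies |F'(b)| = |f'(b)| · (1 − |f(0)|²)/|1 − conj(f(0)) f(b)|² ≤ |f'(b)| · (1 + |f(0)|)/(1 − |f(0)|). -/

import Mathlib

/-!
With `a = f 0`, `F = φₐ ∘ f` for the disk automorphism `φₐ w = (w - a) / (1 - ā w)`. The identity
`|1 - ā w|² - |w - a|² = (1 - |a|²)(1 - |w|²)` shows that `φₐ` maps the open disk into itself and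
the unit circle to itself. Since `|b| = 1`, `b` lies outside the open disk, so the boundary
difference quotient of `f` converging is exactly `f` having a derivative at `b` within the disk,
and the chain rule gives `F'(b) = φₐ'(f b) f'(b)` with `φₐ'(w) = (1 - |a|²) / (1 - ā w)²`. Finally
`|1 - ā w| ≥ 1 - |a|` for `|w| ≤ 1` bounds `(1 - |a|²) / |1 - ā w|²` by `(1 + |a|) / (1 - |a|)`.
-/

open Complex Filter Topology ComplexConjugate

theorem hasDerivWithinAt_iff_tendsto_div_sub {𝕜 : Type*} [NontriviallyNormedField 𝕜]
    {f : 𝕜 → 𝕜} {f' x : 𝕜} {s : Set 𝕜} (hs : x ∉ s) :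
    HasDerivWithinAt f f' s x ↔ Tendsto (fun z => (f z - f x) / (z - x)) (𝓝[s] x) (𝓝 f') := by
  rw [hasDerivWithinAt_iff_tendsto_slope' hs, slope_fun_def_field]

noncomputable def mobius (a w : ℂ) : ℂ := (w - a) / (1 - conj a * w)

theorem norm_one_sub_conj_mul_sq_sub_norm_sub_sq (a w : ℂ) :
    ‖1 - conj a * w‖ ^ 2 - ‖w - a‖ ^ 2 = (1 - ‖a‖ ^ 2) * (1 - ‖w‖ ^ 2) := by
  simp only [← normSq_eq_norm_sq, normSq_apply, sub_re, sub_im, mul_re, mul_im, conj_re, conj_im,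
    one_re, one_im]
  ring

section Mobius

variable {a w : ℂ}

theorem one_sub_conj_mul_ne_zero (ha : ‖a‖ < 1) (hw : ‖w‖ ≤ 1) : 1 - conj a * w ≠ 0 := by
  refine sub_ne_zero.mpr fun h => ?_
  have : ‖conj a * w‖ < 1 := by
    rw [norm_mul, Complex.norm_conj]
    nlinarith [norm_nonneg a, norm_nonneg w]
  simp [← h] at this

theorem norm_mobius_lt_one (ha : ‖a‖ < 1) (hw : ‖w‖ < 1) : ‖mobius a w‖ < 1 := by
  have hd := one_sub_conj_mul_ne_zero ha hw.le
  have key := norm_one_sub_conj_mul_sq_sub_norm_sub_sq a w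
  have hpos : 0 < (1 - ‖a‖ ^ 2) * (1 - ‖w‖ ^ 2) := by
    apply mul_pos <;> nlinarith [norm_nonneg a, norm_nonneg w]
  have hlt : ‖w - a‖ ^ 2 < ‖1 - conj a * w‖ ^ 2 := by linarith
  rw [mobius, norm_div, div_lt_one (norm_pos_iff.mpr hd)]
  exact (pow_lt_pow_iff_left₀ (norm_nonneg _) (norm_nonneg _) two_ne_zero).mp hlt

theorem norm_mobius_eq_one (ha : ‖a‖ < 1) (hw : ‖w‖ = 1) : ‖mobius a w‖ = 1 := by
  have hd := one_sub_conj_mul_ne_zero ha hw.le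
  have key := norm_one_sub_conj_mul_sq_sub_norm_sub_sq a w
  rw [hw] at key
  have heq : ‖w - a‖ ^ 2 = ‖1 - conj a * w‖ ^ 2 := by linarith
  rw [mobius, norm_div, div_eq_one_iff_eq (norm_ne_zero_iff.mpr hd)]
  exact (pow_left_inj₀ (norm_nonneg _) (norm_nonneg _) two_ne_zero).mp heq

theorem hasDerivAt_mobius (ha : ‖a‖ < 1) (hw : ‖w‖ ≤ 1) :
    HasDerivAt (mobius a) ((1 - normSq a) / (1 - conj a * w) ^ 2) w := by
  have hd := one_sub_conj_mul_ne_zero ha hw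
  refine (((hasDerivAt_id w).sub_const a).div
    (((hasDerivAt_id w).const_mul (conj a)).const_sub 1) hd).congr_deriv ?_
  simp only [id, normSq_eq_conj_mul_self]
  ring

theorem norm_deriv_mobius (ha : ‖a‖ ≤ 1) :
    ‖((1 : ℂ) - normSq a) / (1 - conj a * w) ^ 2‖ = (1 - ‖a‖ ^ 2) / ‖1 - conj a * w‖ ^ 2 := by
  rw [norm_div, norm_pow, ← ofReal_one, ← ofReal_sub, norm_real, normSq_eq_norm_sq,
    Real.norm_of_nonneg (by nlinarith [norm_nonneg a])]

theorem norm_deriv_mobius_le (ha : ‖a‖ < 1) (hw : ‖w‖ ≤ 1) :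
    ‖((1 : ℂ) - normSq a) / (1 - conj a * w) ^ 2‖ ≤ (1 + ‖a‖) / (1 - ‖a‖) := by
  rw [norm_deriv_mobius ha.le]
  have h1a : 0 < 1 - ‖a‖ := by linarith
  have hD : 1 - ‖a‖ ≤ ‖1 - conj a * w‖ := by
    calc 1 - ‖a‖ ≤ ‖(1 : ℂ)‖ - ‖conj a * w‖ := by
          rw [norm_one, norm_mul, Complex.norm_conj]
          nlinarith [norm_nonneg a]
      _ ≤ ‖1 - conj a * w‖ := norm_sub_norm_le _ _
  calc (1 - ‖a‖ ^ 2) / ‖1 - conj a * w‖ ^ 2 ≤ (1 - ‖a‖ ^ 2) / (1 - ‖a‖) ^ 2 := by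
        gcongr
        nlinarith [norm_nonneg a]
    _ = (1 + ‖a‖) / (1 - ‖a‖) := by
        field_simp
        ring

end Mobius

/-- If `f` satisfies (a), (b), (d) (not assuming `f 0 = 0`) and
`F z = (f z - f 0) / (1 - conj (f 0) · f z)`, then `F` satisfies (a), (b), (c), (d) at
the same boundary point `b`, and its derivative `F'(b)` satisfies
`|F'(b)| = |f'(b)| (1 - |f 0|²) / |1 - conj (f 0) f b|² ≤ |f'(b)| (1 + |f 0|)/(1 - |f 0|)`. -/
theorem mobius_transfer_boundary
    (f F : ℂ → ℂ) (b fb' : ℂ)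
    (ha : DifferentiableOn ℂ f {z : ℂ | ‖z‖ < 1})
    (hb : ∀ z : ℂ, ‖z‖ < 1 → ‖f z‖ < 1)
    (hbmod : ‖b‖ = 1)
    (hcont : ContinuousWithinAt f ({z : ℂ | ‖z‖ < 1} ∪ {b}) b)
    (hfb : ‖f b‖ = 1)
    (hderiv : Tendsto (fun z => (f z - f b) / (z - b))
      (nhdsWithin b {z : ℂ | ‖z‖ < 1}) (nhds fb'))
    (hF : F = fun z => (f z - f 0) / (1 - (starRingEnd ℂ) (f 0) * f z)) :
    DifferentiableOn ℂ F {z : ℂ | ‖z‖ < 1} ∧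
    (∀ z : ℂ, ‖z‖ < 1 → ‖F z‖ < 1) ∧
    F 0 = 0 ∧
    ContinuousWithinAt F ({z : ℂ | ‖z‖ < 1} ∪ {b}) b ∧
    ‖F b‖ = 1 ∧
    ∃ Fb' : ℂ,
      Tendsto (fun z => (F z - F b) / (z - b))
        (nhdsWithin b {z : ℂ | ‖z‖ < 1}) (nhds Fb') ∧
      ‖Fb'‖ = ‖fb'‖ * (1 - ‖f 0‖ ^ 2) /
        ‖1 - (starRingEnd ℂ) (f 0) * f b‖ ^ 2 ∧
      ‖Fb'‖ ≤
        ‖fb'‖ * ((1 + ‖f 0‖) / (1 - ‖f 0‖)) := by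
  set a := f 0
  have h0 : ‖a‖ < 1 := hb 0 (by simp)
  obtain rfl : F = mobius a ∘ f := hF
  have hbD : b ∉ {z : ℂ | ‖z‖ < 1} := by simp [hbmod]
  have hmob := hasDerivAt_mobius h0 hfb.le
  have hF'b := hmob.comp_hasDerivWithinAt b ((hasDerivWithinAt_iff_tendsto_div_sub hbD).mpr hderiv)
  have hdiff : DifferentiableOn ℂ (mobius a ∘ f) {z : ℂ | ‖z‖ < 1} := fun z hz =>
    (hasDerivAt_mobius h0 (hb z hz).le).differentiableAt.comp_differentiableWithinAt z (ha z hz)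
  refine ⟨hdiff, fun z hz => norm_mobius_lt_one h0 (hb z hz), by simp [a, mobius],
    hmob.continuousAt.comp_continuousWithinAt hcont, norm_mobius_eq_one h0 hfb, _,
    (hasDerivWithinAt_iff_tendsto_div_sub hbD).mp hF'b, ?_, ?_⟩
  · rw [norm_mul, norm_deriv_mobius h0.le, mul_comm, mul_div_assoc]
  · rw [norm_mul, mul_comm]
    exact mul_le_mul_of_nonneg_left (norm_deriv_mobius_le h0 hfb.le) (norm_nonneg _)
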